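/- Let H be a square-free graph and W = γ₀ γ₁ ⋯ γ_k an nc-walk with k ≥ 1. Let K be the gadget path s v₁ ⋯ v_{k-1} t with pendants u_i pinned to γ_i. Suppose in addition that deg(γ_i) ≡ 1 (mod p) for all i ∈ [k−1]. Then |Hom((K,s,t),(H,γ₁,γ_{k-1}))| ≡ 1 (mod p), where Hom((K,s,t),(H,γ₁,γ_{k-1})) denotes homomorphisms σ : K → H with σ(u_i) = γ_i, σ(s) = γ₁, σ(t) = γ_{k-1}. -/

import Mathlib

/-!
A homomorphism `σ` of the gadget starts at `σ 0 = γ 1`, one step ahead of the walk. Let `i` be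
the first position with `σ i = w ≠ γ (i + 1)`; `w` is a neighbour of `γ i`. From then on `σ` runs
one step behind the walk: `σ (j + 1)` and `γ j` are both common neighbours of `σ j` and `γ (j + 1)`,
so they coincide when `H` has no 4-cycle, and the nc-condition `γ (j - 1) ≠ γ (j + 1)` lets the
argument continue. Conversely every such pair `(i, w)` gives a homomorphism, so there are
`1 + ∑ (deg γ i - 1)` of them, which is `1` modulo `p`.
-/

namespace PathGadget

open Finset

variable {V : Type*}

def FourCycleFree (H : SimpleGraph V) : Prop :=
  ∀ a b c d : V, a ≠ b → b ≠ c → c ≠ d → d ≠ a → a ≠ c → b ≠ d →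
    ¬(H.Adj a b ∧ H.Adj b c ∧ H.Adj c d ∧ H.Adj d a)

theorem FourCycleFree.subsingleton_commonNeighbors {H : SimpleGraph V} (hH : FourCycleFree H)
    {a c : V} (hac : a ≠ c) : (H.commonNeighbors a c).Subsingleton := by
  rintro x ⟨hax, hcx⟩ y ⟨hay, hcy⟩
  by_contra hxy
  exact hH a x c y hax.ne hcx.ne' hcy.ne hay.ne' hac hxy ⟨hax, hcx.symm, hcy, hay.symm⟩

/-- Positions `0, …, k` of `σ` are `s, v₁, …, v_{k-1}, t`; the pendant `uᵢ` pinned to `γ i` becomes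
the condition `σ i ~ γ i`. -/
def IsGadgetHom (H : SimpleGraph V) (k : ℕ) (γ : ℕ → V) (σ : Fin (k + 1) → V) : Prop :=
  (∀ i : ℕ, (h : i < k) → H.Adj (σ ⟨i, Nat.lt_succ_of_lt h⟩) (σ ⟨i + 1, Nat.succ_lt_succ h⟩)) ∧
  (∀ i : ℕ, 1 ≤ i → (h : i + 1 ≤ k) → H.Adj (σ ⟨i, Nat.lt_succ_of_lt h⟩) (γ i)) ∧
  σ 0 = γ 1 ∧ σ ⟨k, Nat.lt_succ_self k⟩ = γ (k - 1)

def deviation (k : ℕ) (γ : ℕ → V) (i : ℕ) (w : V) : Fin (k + 1) → V :=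
  fun j => if (j : ℕ) < i then γ (j + 1) else if (j : ℕ) = i then w else γ (j - 1)

section

variable {H : SimpleGraph V} {k : ℕ} {γ : ℕ → V}

theorem deviation_isGadgetHom (hwalk : ∀ i < k, H.Adj (γ i) (γ (i + 1)))
    {i : ℕ} {w : V} (hi : 1 ≤ i) (hik : i ≤ k) (hw : H.Adj (γ i) w)
    (hend : i = k → w = γ (k - 1)) : IsGadgetHom H k γ (deviation k γ i w) := by
  refine ⟨fun m hm => ?_, fun m hm hmk => ?_, ?_, ?_⟩
  · simp only [deviation]
    rcases lt_trichotomy (m + 1) i with h | rfl | h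
    · simpa [h, show m < i by omega] using hwalk (m + 1) (by omega)
    · simpa using hw
    · rcases eq_or_lt_of_le (Nat.le_of_lt_succ h) with rfl | h'
      · simpa using hw.symm
      · have := hwalk (m - 1) (by omega)
        rw [Nat.sub_add_cancel (by omega)] at this
        simpa [show ¬ m < i by omega, show m ≠ i by omega, show ¬ m + 1 < i by omega,
          show m + 1 ≠ i by omega] using this
  · simp only [deviation]
    rcases lt_trichotomy m i with h | rfl | h
    · simpa [h] using (hwalk m (by omega)).symm
    · simpa using hw.symm
    · have := hwalk (m - 1) (by omega)
      rw [Nat.sub_add_cancel (by omega)] at this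
      simpa [show ¬ m < i by omega, show m ≠ i by omega] using this
  · simp [deviation, show 0 < i by omega]
  · rcases eq_or_lt_of_le hik with rfl | h
    · simpa [deviation] using hend rfl
    · simp [deviation, show ¬ k < i by omega, show k ≠ i by omega]

theorem IsGadgetHom.succ_eq_of_ne (hH : FourCycleFree H)
    (hwalk : ∀ i < k, H.Adj (γ i) (γ (i + 1))) {σ : Fin (k + 1) → V} (hσ : IsGadgetHom H k γ σ)
    {j : ℕ} (hj : 1 ≤ j) (hjk : j < k) (hne : σ ⟨j, Nat.lt_succ_of_lt hjk⟩ ≠ γ (j + 1)) :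
    σ ⟨j + 1, Nat.succ_lt_succ hjk⟩ = γ j := by
  obtain ⟨hedge, hpend, -, hlast⟩ := hσ
  rcases eq_or_lt_of_le (Nat.succ_le_of_lt hjk) with rfl | hlt
  · simpa using hlast
  -- both `σ (j + 1)` and `γ j` are common neighbours of `σ j` and `γ (j + 1)`
  exact hH.subsingleton_commonNeighbors hne
    ⟨hedge j hjk, (hpend (j + 1) (by omega) hlt).symm⟩ ⟨hpend j hj hjk, (hwalk j hjk).symm⟩

theorem IsGadgetHom.eq_deviation (hH : FourCycleFree H)
    (hwalk : ∀ i < k, H.Adj (γ i) (γ (i + 1)))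
    (hnc : ∀ i, 1 ≤ i → i + 1 ≤ k → γ (i - 1) ≠ γ (i + 1))
    {σ : Fin (k + 1) → V} (hσ : IsGadgetHom H k γ σ) {i : ℕ} (hik : i ≤ k)
    (hbefore : ∀ j (hj : j < i), σ ⟨j, Nat.lt_succ_of_le (hj.le.trans hik)⟩ = γ (j + 1))
    (hdev : i < k → σ ⟨i, Nat.lt_succ_of_le hik⟩ ≠ γ (i + 1)) :
    σ = deviation k γ i (σ ⟨i, Nat.lt_succ_of_le hik⟩) := by
  have hafter : ∀ m (hm : i + 1 ≤ m) (hmk : m ≤ k),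
      σ ⟨m, Nat.lt_succ_of_le hmk⟩ = γ (m - 1) := by
    intro m hm
    induction m, hm using Nat.le_induction with
    | base =>
      intro hik'
      have hi : 1 ≤ i := by
        by_contra hi0
        obtain rfl : i = 0 := by omega
        exact hdev hik' hσ.2.2.1
      exact hσ.succ_eq_of_ne hH hwalk hi hik' (hdev hik')
    | succ m hm ih =>
      intro hmk
      have hne : σ ⟨m, Nat.lt_succ_of_lt hmk⟩ ≠ γ (m + 1) := by
        rw [ih (by omega)]
        exact hnc m (by omega) hmk
      exact hσ.succ_eq_of_ne hH hwalk (by omega) (by omega) hne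
  funext ⟨j, hj⟩
  simp only [deviation]
  rcases lt_trichotomy j i with h | rfl | h
  · simp [h, hbefore j h]
  · simp
  · simp [show ¬ j < i by omega, show j ≠ i by omega, hafter j h (by omega)]

variable [Fintype V] [DecidableEq V] [DecidableRel H.Adj]

variable (H k γ) in
/-- `⟨k, γ (k - 1)⟩` stands for the homomorphism `j ↦ γ (j + 1)` that never deviates. -/
def deviationData : Finset (Σ _ : ℕ, V) :=
  insert ⟨k, γ (k - 1)⟩ ((Ico 1 k).sigma fun i => (H.neighborFinset (γ i)).erase (γ (i + 1)))

theorem mem_deviationData {x : Σ _ : ℕ, V} :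
    x ∈ deviationData H k γ ↔
      x = ⟨k, γ (k - 1)⟩ ∨ 1 ≤ x.1 ∧ x.1 < k ∧ H.Adj (γ x.1) x.2 ∧ x.2 ≠ γ (x.1 + 1) := by
  simp only [deviationData, mem_insert, mem_sigma, mem_Ico, mem_erase,
    SimpleGraph.mem_neighborFinset]
  tauto

theorem card_deviationData (hwalk : ∀ i < k, H.Adj (γ i) (γ (i + 1))) :
    #(deviationData H k γ) = 1 + ∑ i ∈ Ico 1 k, (H.degree (γ i) - 1) := by
  rw [deviationData, card_insert_of_notMem (by simp), card_sigma, add_comm]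
  congr 1
  refine sum_congr rfl fun i hi => ?_
  rw [card_erase_of_mem ((H.mem_neighborFinset _ _).2 (hwalk i (mem_Ico.1 hi).2)),
    SimpleGraph.card_neighborFinset_eq_degree]

theorem fst_le_of_mem_deviationData {x : Σ _ : ℕ, V} (hx : x ∈ deviationData H k γ) :
    x.1 ≤ k := by
  rcases mem_deviationData.1 hx with rfl | hx
  exacts [le_rfl, hx.2.1.le]

theorem snd_ne_of_mem_deviationData {x : Σ _ : ℕ, V} (hx : x ∈ deviationData H k γ)
    (hxk : x.1 < k) : x.2 ≠ γ (x.1 + 1) := by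
  rcases mem_deviationData.1 hx with rfl | hx
  exacts [absurd hxk (lt_irrefl k), hx.2.2.2]

theorem injOn_deviation :
    Set.InjOn (fun x : Σ _ : ℕ, V => deviation k γ x.1 x.2) (deviationData H k γ) := by
  -- the first position where `deviation k γ i w` leaves `γ (· + 1)` is `i`
  have hle : ∀ x ∈ deviationData H k γ, ∀ y ∈ deviationData H k γ,
      deviation k γ x.1 x.2 = deviation k γ y.1 y.2 → x.1 ≤ y.1 := by
    intro x hx y hy h
    by_contra! hlt
    have hxk := fst_le_of_mem_deviationData hx
    have := congrFun h ⟨y.1, Nat.lt_succ_of_le (hlt.le.trans hxk)⟩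
    simp only [deviation, hlt, if_true, lt_irrefl, if_false] at this
    exact snd_ne_of_mem_deviationData hy (by omega) this.symm
  rintro ⟨i, w⟩ hx ⟨i', w'⟩ hy h
  obtain rfl : i = i' := le_antisymm (hle _ hx _ hy h) (hle _ hy _ hx h.symm)
  have hik : i ≤ k := fst_le_of_mem_deviationData hx
  simpa [deviation] using congrFun h ⟨i, Nat.lt_succ_of_le hik⟩

theorem image_deviation (hH : FourCycleFree H) (hk : 1 ≤ k)
    (hwalk : ∀ i < k, H.Adj (γ i) (γ (i + 1)))
    (hnc : ∀ i, 1 ≤ i → i + 1 ≤ k → γ (i - 1) ≠ γ (i + 1)) :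
    (fun x : Σ _ : ℕ, V => deviation k γ x.1 x.2) '' (deviationData H k γ) =
      {σ | IsGadgetHom H k γ σ} := by
  ext σ
  constructor
  · rintro ⟨x, hx, rfl⟩
    rcases mem_deviationData.1 hx with rfl | ⟨hi, hik, hw, -⟩
    · have hlast := hwalk (k - 1) (by omega)
      rw [Nat.sub_add_cancel hk] at hlast
      exact deviation_isGadgetHom hwalk hk le_rfl hlast.symm fun _ => rfl
    · exact deviation_isGadgetHom hwalk hi hik.le hw (absurd · hik.ne)
  · intro hσ
    by_cases hdev : ∃ j, ∃ hj : j < k, σ ⟨j, Nat.lt_succ_of_lt hj⟩ ≠ γ (j + 1)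
    · obtain ⟨hik, hne⟩ := Nat.find_spec hdev
      have hbefore : ∀ j (hj : j < Nat.find hdev),
          σ ⟨j, Nat.lt_succ_of_lt (hj.trans hik)⟩ = γ (j + 1) :=
        fun j hj => not_not.1 (not_exists.1 (Nat.find_min hdev hj) (hj.trans hik))
      have hi : 1 ≤ Nat.find hdev :=
        Nat.pos_of_ne_zero fun h0 => hne (by simpa [h0] using hσ.2.2.1)
      refine ⟨⟨Nat.find hdev, σ ⟨Nat.find hdev, Nat.lt_succ_of_lt hik⟩⟩,
        mem_deviationData.2 (Or.inr ⟨hi, hik, (hσ.2.1 _ hi hik).symm, hne⟩), ?_⟩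
      exact (hσ.eq_deviation hH hwalk hnc hik.le hbefore fun _ => hne).symm
    · push Not at hdev
      refine ⟨⟨k, γ (k - 1)⟩, mem_deviationData.2 (Or.inl rfl), ?_⟩
      have := hσ.eq_deviation hH hwalk hnc le_rfl hdev (absurd · (lt_irrefl k))
      rw [this, hσ.2.2.2]

theorem ncard_setOf_isGadgetHom (hH : FourCycleFree H) (hk : 1 ≤ k)
    (hwalk : ∀ i < k, H.Adj (γ i) (γ (i + 1)))
    (hnc : ∀ i, 1 ≤ i → i + 1 ≤ k → γ (i - 1) ≠ γ (i + 1)) :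
    {σ | IsGadgetHom H k γ σ}.ncard = 1 + ∑ i ∈ Ico 1 k, (H.degree (γ i) - 1) := by
  rw [← image_deviation hH hk hwalk hnc, injOn_deviation.ncard_image,
    Set.ncard_coe_finset, card_deviationData hwalk]

end

end PathGadget

/-- For the path gadget on an nc-walk `γ₀ … γ_k` in a square-free graph, if
`deg(γ_i) ≡ 1 (mod p)` for all `i ∈ [k-1]`, then the number of homomorphisms with
`σ(s) = γ₁` and `σ(t) = γ_{k-1}` is congruent to 1 modulo `p`. -/
theorem stmt15 {V : Type*} [Fintype V]
    (H : SimpleGraph V) [DecidableRel H.Adj]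
    (p : ℕ)
    (hsf : ∀ a b c d : V, a ≠ b → b ≠ c → c ≠ d → d ≠ a → a ≠ c → b ≠ d →
      ¬(H.Adj a b ∧ H.Adj b c ∧ H.Adj c d ∧ H.Adj d a))
    (k : ℕ) (hk : 1 ≤ k)
    (γ : ℕ → V)
    (hwalk : ∀ i < k, H.Adj (γ i) (γ (i + 1)))
    (hnc : ∀ i, 1 ≤ i → i + 1 ≤ k → γ (i - 1) ≠ γ (i + 1))
    (hdeg : ∀ i, 1 ≤ i → i + 1 ≤ k → (H.degree (γ i) : ZMod p) = 1) :
    (Set.ncard {σ : Fin (k + 1) → V |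
      (∀ i : ℕ, (h : i < k) →
        H.Adj (σ ⟨i, by omega⟩) (σ ⟨i + 1, by omega⟩)) ∧
      (∀ i : ℕ, 1 ≤ i → (h : i + 1 ≤ k) → H.Adj (σ ⟨i, by omega⟩) (γ i)) ∧
      σ 0 = γ 1 ∧ σ ⟨k, by omega⟩ = γ (k - 1)} : ZMod p) = 1 := by
  classical
  change (({σ | PathGadget.IsGadgetHom H k γ σ}.ncard : ℕ) : ZMod p) = 1
  have hterm : ∀ i ∈ Finset.Ico 1 k, ((H.degree (γ i) - 1 : ℕ) : ZMod p) = 0 := fun i hi => by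
    obtain ⟨hi, hik⟩ := Finset.mem_Ico.1 hi
    rw [Nat.cast_sub ((H.degree_pos_iff_exists_adj _).2 ⟨_, hwalk i hik⟩), hdeg i hi hik,
      Nat.cast_one, sub_self]
  rw [PathGadget.ncard_setOf_isGadgetHom hsf hk hwalk hnc, Nat.cast_add, Nat.cast_sum,
    Finset.sum_eq_zero hterm, Nat.cast_one, add_zero]
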